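/- arXiv:2003.06448 — 3 statements merged into one kernel-verified Lean document; each statement's English description precedes it below -/
import Mathlib

section
/- For any δ > 0, α > 0 and T₀ > 0, there exists a constant Â > 0 such that for every T ∈ (0, T₀], the μ_T-measure of the set {(x,y,z) ∈ ℝⁿ×ℝⁿ×ℝᵐ : U(x) > min U + δ} is at most Â·exp(−(δ−α)/T). -/
noncomputable section

open Real MeasureTheory Filter

/-- The state space ℝⁿ × ℝⁿ × ℝᵐ. -/
abbrev St (n m : ℕ) := (Fin n → ℝ) × (Fin n → ℝ) × (Fin m → ℝ)

/-- `i`-th component of the gradient of a function on ℝᵏ. -/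
def gradp {k : ℕ} (U : (Fin k → ℝ) → ℝ) (x : Fin k → ℝ) (i : Fin k) : ℝ :=
  fderiv ℝ U x (Pi.single i 1)

/-- Partial derivative in the `i`-th x-coordinate. -/
def pX {n m : ℕ} (f : St n m → ℝ) (i : Fin n) (p : St n m) : ℝ :=
  fderiv ℝ f p (Pi.single i 1, 0, 0)

/-- Partial derivative in the `i`-th y-coordinate. -/
def pY {n m : ℕ} (f : St n m → ℝ) (i : Fin n) (p : St n m) : ℝ :=
  fderiv ℝ f p (0, Pi.single i 1, 0)

/-- Partial derivative in the `j`-th z-coordinate. -/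
def pZ {n m : ℕ} (f : St n m → ℝ) (j : Fin m) (p : St n m) : ℝ :=
  fderiv ℝ f p (0, 0, Pi.single j 1)

/-- Squared Euclidean norm of a vector. -/
def sqnorm {k : ℕ} (v : Fin k → ℝ) : ℝ := ∑ i, (v i) ^ 2

/-- Squared Euclidean norm of the full gradient. -/
def gradSq {n m : ℕ} (f : St n m → ℝ) (p : St n m) : ℝ :=
  (∑ i, (pX f i p) ^ 2) + (∑ i, (pY f i p) ^ 2) + (∑ j, (pZ f j p) ^ 2)

/-- The Hamiltonian W(x,y,z) = U(x) + |y|²/2 + |z|²/2. -/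
def Wfun {n m : ℕ} (U : (Fin n → ℝ) → ℝ) (p : St n m) : ℝ :=
  U p.1 + sqnorm p.2.1 / 2 + sqnorm p.2.2 / 2

/-- Normalizing constant Z_T. -/
def Zpart (n m : ℕ) (U : (Fin n → ℝ) → ℝ) (T : ℝ) : ℝ :=
  ∫ p : St n m, Real.exp (-(Wfun U p) / T)

/-- Density of the instantaneous equilibrium μ_T w.r.t. Lebesgue. -/
def muDen (n m : ℕ) (U : (Fin n → ℝ) → ℝ) (T : ℝ) (p : St n m) : ℝ :=
  Real.exp (-(Wfun U p) / T) / Zpart n m U T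

/-- The Gibbs measure μ_T ∝ exp(−W/T). -/
def muT (n m : ℕ) (U : (Fin n → ℝ) → ℝ) (T : ℝ) : Measure (St n m) :=
  volume.withDensity fun p => ENNReal.ofReal (muDen n m U T p)

/-- Generator of the generalised Langevin dynamics at temperature T. -/
def genL {n m : ℕ} (U : (Fin n → ℝ) → ℝ) (A : Matrix (Fin m) (Fin m) ℝ)
    (lam : Matrix (Fin m) (Fin n) ℝ) (T : ℝ) (f : St n m → ℝ) (p : St n m) : ℝ :=
  (∑ i, p.2.1 i * pX f i p)
    - (∑ i, gradp U p.1 i * pY f i p)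
    + (∑ i, (lam.transpose.mulVec p.2.2) i * pY f i p)
    - (∑ j, (lam.mulVec p.2.1) j * pZ f j p)
    - T⁻¹ * (∑ j, (A.transpose.mulVec p.2.2) j * pZ f j p)
    + (∑ i, ∑ j, A i j * pZ (fun q => pZ f j q) i p)

/-- Formal L²(μ_T)-adjoint of the generator. -/
def genLstar {n m : ℕ} (U : (Fin n → ℝ) → ℝ) (A : Matrix (Fin m) (Fin m) ℝ)
    (lam : Matrix (Fin m) (Fin n) ℝ) (T : ℝ) (h : St n m → ℝ) (p : St n m) : ℝ :=
  -(∑ i, p.2.1 i * pX h i p)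
    + (∑ i, gradp U p.1 i * pY h i p)
    - (∑ i, (lam.transpose.mulVec p.2.2) i * pY h i p)
    + (∑ j, (lam.mulVec p.2.1) j * pZ h j p)
    - T⁻¹ * (∑ j, (A.mulVec p.2.2) j * pZ h j p)
    + (∑ i, ∑ j, A i j * pZ (fun q => pZ h j q) i p)

/-- Formal Lebesgue adjoint L_T^⊤ (Fokker–Planck operator). -/
def genLadj {n m : ℕ} (U : (Fin n → ℝ) → ℝ) (A : Matrix (Fin m) (Fin m) ℝ)
    (lam : Matrix (Fin m) (Fin n) ℝ) (T : ℝ) (g : St n m → ℝ) (p : St n m) : ℝ :=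
  -(∑ i, p.2.1 i * pX g i p)
    + (∑ i, (gradp U p.1 i - (lam.transpose.mulVec p.2.2) i) * pY g i p)
    + (∑ j, ((lam.mulVec p.2.1) j + T⁻¹ * (A.transpose.mulVec p.2.2) j) * pZ g j p)
    + T⁻¹ * A.trace * g p
    + (∑ i, ∑ j, A i j * pZ (fun q => pZ g j q) i p)

/-- Operator norm of a matrix (Euclidean → Euclidean). -/
def opNorm {a b : ℕ} (M : Matrix (Fin a) (Fin b) ℝ) : ℝ :=
  sSup {c : ℝ | ∃ v : Fin b → ℝ, sqnorm v ≤ 1 ∧ c = Real.sqrt (sqnorm (M.mulVec v))}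

/-- The Lyapunov function R(x,y,z,T). -/
def Rfun {n m : ℕ} (U : (Fin n → ℝ) → ℝ) (lamInv : Matrix (Fin n) (Fin m) ℝ)
    (δ T : ℝ) (p : St n m) : ℝ :=
  Wfun U p + δ * T * ((∑ i, p.2.1 i * (lamInv.mulVec p.2.2) i) + (∑ i, p.1 i * p.2.1 i) / 2)

/-- Full gradient indexed by x-, y-, z-coordinates. -/
def fullGrad {n m : ℕ} (f : St n m → ℝ) (p : St n m) : (Fin n ⊕ (Fin n ⊕ Fin m)) → ℝ :=
  Sum.elim (fun i => pX f i p) (Sum.elim (fun i => pY f i p) (fun j => pZ f j p))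

/-- Gateaux derivative dΦ(h).g of a map on functions. -/
def gateaux {n m : ℕ} (Φ : (St n m → ℝ) → St n m → ℝ) (h g : St n m → ℝ) (p : St n m) : ℝ :=
  deriv (fun s : ℝ => Φ (fun q => h q + s * g q) p) 0

/-- Γ_{L_T*,Φ}(h) := ½ (L_T*(Φ(h)) − dΦ(h).(L_T* h)). -/
def GammaPhi {n m : ℕ} (U : (Fin n → ℝ) → ℝ) (A : Matrix (Fin m) (Fin m) ℝ)
    (lam : Matrix (Fin m) (Fin n) ℝ) (T : ℝ)
    (Φ : (St n m → ℝ) → St n m → ℝ) (h : St n m → ℝ) (p : St n m) : ℝ :=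
  (genLstar U A lam T (Φ h) p - gateaux Φ h (genLstar U A lam T h) p) / 2

/-- Φ₁(h) = |2∇ₓh + 8S₀(∇_y h + λ⁻¹∇_z h)|²/h. -/
def Phi1 {n m : ℕ} (lamInv : Matrix (Fin n) (Fin m) ℝ) (S0 : ℝ)
    (g : St n m → ℝ) (p : St n m) : ℝ :=
  (∑ i, (2 * pX g i p + 8 * S0 * (pY g i p + (lamInv.mulVec fun j => pZ g j p) i)) ^ 2) / g p

/-- Φ₂(h) = |∇_y h + S₁λ⁻¹∇_z h|²/h. -/
def Phi2 {n m : ℕ} (lamInv : Matrix (Fin n) (Fin m) ℝ) (S1 : ℝ)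
    (g : St n m → ℝ) (p : St n m) : ℝ :=
  (∑ i, (pY g i p + S1 * (lamInv.mulVec fun j => pZ g j p) i) ^ 2) / g p

/-- β(s) = 1 + β₀ + β₁ s + β₂ s². -/
def betaP (β0 β1 β2 s : ℝ) : ℝ := 1 + β0 + β1 * s + β2 * s ^ 2

/-- Ψ_T(h) = Φ₁(h) + Φ₂(h) + β·h ln h. -/
def PsiT {n m : ℕ} (lamInv : Matrix (Fin n) (Fin m) ℝ) (S0 S1 βc : ℝ)
    (g : St n m → ℝ) (p : St n m) : ℝ :=
  Phi1 lamInv S0 g p + Phi2 lamInv S1 g p + βc * (g p * Real.log (g p))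

/-- λ̂² = max(|λ|², |λᵀ|², |λ⁻¹|², |λ⁻¹||λᵀ|). -/
def lamhatSq {n m : ℕ} (lam : Matrix (Fin m) (Fin n) ℝ)
    (lamInv : Matrix (Fin n) (Fin m) ℝ) : ℝ :=
  max (max (opNorm lam ^ 2) (opNorm lam.transpose ^ 2))
    (max (opNorm lamInv ^ 2) (opNorm lamInv * opNorm lam.transpose))

/-! The Gibbs density factorises as `e^{-U(x)/T}` times a Gaussian in `(y, z)`, so the
`μ_T`-measure of `{U > U x₀ + δ}` is at most its mass under the `x`-marginal `∝ e^{-U/T}`.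
For the numerator, on `{U ≥ c₁}` with `c₁ = U x₀ + δ - α/2` one has
`e^{-U/T} ≤ e^{c₁/T₀ - c₁/T} e^{-U/T₀}` for `T ≤ T₀`, and `e^{-U/T₀}` is integrable by the
quadratic lower bound on `U`. For the denominator, `U < c₂ = U x₀ + α/2` on a neighbourhood of
`x₀` of positive finite measure, so `Z_T ≥ v e^{-c₂/T}`. The ratio is `O(e^{-(c₁ - c₂)/T})`,
and `c₁ - c₂ = δ - α`. -/

open Set Topology

lemma integrable_exp_neg_sum_mul_sq {ι : Type*} [Fintype ι] {b : ι → ℝ}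
    (hb : ∀ i, 0 < b i) : Integrable (fun v : ι → ℝ => exp (-∑ i, b i * v i ^ 2)) := by
  simp_rw [← Finset.sum_neg_distrib, exp_sum, ← neg_mul]
  exact Integrable.fintype_prod fun i => integrable_exp_neg_mul_sq (hb i)

lemma integrable_exp_neg_div_of_sqnorm_mul_add_le {k : ℕ} {U : (Fin k → ℝ) → ℝ}
    (hU : Measurable U) {a : Fin k → ℝ} (ha : ∀ i, a i ≠ 0) {c : ℝ}
    (hUa : ∀ x, sqnorm (fun i => a i * x i) + c ≤ U x) {t : ℝ} (ht : 0 < t) :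
    Integrable (fun x => exp (-U x / t)) := by
  have hb : ∀ i, 0 < a i ^ 2 / t := fun i => have := ha i; by positivity
  refine ((integrable_exp_neg_sum_mul_sq hb).const_mul (exp (-c / t))).mono' (by fun_prop)
    (ae_of_all _ fun x => ?_)
  have hsum : ∑ i, a i ^ 2 / t * x i ^ 2 = sqnorm (fun i => a i * x i) / t := by
    simp only [sqnorm, Finset.sum_div, mul_pow, div_mul_eq_mul_div]
  rw [norm_of_nonneg (exp_pos _).le, ← exp_add, exp_le_exp, hsum]
  have := div_le_div_of_nonneg_right (neg_le_neg (hUa x)) ht.le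
  linarith [show -(sqnorm (fun i => a i * x i) + c) / t
    = -c / t + -(sqnorm (fun i => a i * x i) / t) by ring]

lemma tilted_prod {α β : Type*} {mα : MeasurableSpace α} {mβ : MeasurableSpace β}
    {μ : Measure α} {ν : Measure β} [SFinite μ] [SFinite ν] {f : α → ℝ} {g : β → ℝ}
    (hf : AEMeasurable f μ) (hg : AEMeasurable g ν) :
    (μ.prod ν).tilted (fun z => f z.1 + g z.2) = (μ.tilted f).prod (ν.tilted g) := by
  rw [Measure.tilted, Measure.tilted, Measure.tilted,
    prod_withDensity₀ (by fun_prop) (by fun_prop)]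
  congr with z
  simp_rw [exp_add]
  rw [integral_prod_mul (fun x => exp (f x)) (fun y => exp (g y)), mul_div_mul_comm,
    ENNReal.ofReal_mul (by positivity)]

lemma muT_preimage_fst_le {n m : ℕ} {U : (Fin n → ℝ) → ℝ} (hU : Measurable U) (T : ℝ)
    (A : Set (Fin n → ℝ)) :
    muT n m U T (Prod.fst ⁻¹' A) ≤ volume.tilted (fun x => -U x / T) A := by
  have hsplit : muT n m U T = (volume.tilted fun x => -U x / T).prod
      (volume.tilted fun q : (Fin n → ℝ) × (Fin m → ℝ) =>
        -(sqnorm q.1 / 2 + sqnorm q.2 / 2) / T) := by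
    rw [Measure.volume_eq_prod, ← tilted_prod (by fun_prop) (by unfold sqnorm; fun_prop)]
    show volume.tilted (fun p : St n m => -Wfun U p / T) = _
    congr with p
    unfold Wfun
    ring
  rw [hsplit, ← prod_univ, Measure.prod_prod]
  exact mul_le_of_le_one_right' prob_le_one

lemma exp_neg_div_le_exp_mul_exp_neg_div {u c T T₀ : ℝ} (hcu : c ≤ u) (hT : 0 < T)
    (hTT₀ : T ≤ T₀) : exp (-u / T) ≤ exp (c / T₀ - c / T) * exp (-u / T₀) := by
  rw [← exp_add, exp_le_exp]
  have := div_le_div_of_nonneg_left (sub_nonneg.2 hcu) hT hTT₀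
  linarith [show -u / T = -c / T - (u - c) / T by ring,
    show c / T₀ - c / T + -u / T₀ = -c / T - (u - c) / T₀ by ring]

lemma tilted_neg_div_le_of_mul_exp_le_integral {X : Type*} [MeasurableSpace X]
    {μ : Measure X} {U : X → ℝ} (hU : Measurable U) {T T₀ c c' v : ℝ} (hT : 0 < T)
    (hTT₀ : T ≤ T₀) (hv : 0 < v) (hint : Integrable (fun x => exp (-U x / T₀)) μ)
    (hZ : v * exp (-c' / T) ≤ ∫ x, exp (-U x / T) ∂μ) :
    μ.tilted (fun x => -U x / T) {x | c ≤ U x} ≤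
      ENNReal.ofReal (exp (c / T₀) * (∫ x, exp (-U x / T₀) ∂μ) / v * exp (-(c - c') / T)) := by
  set K := exp (c / T₀ - c / T) / (v * exp (-c' / T))
  have hK : K = exp (c / T₀) / v * exp (-(c - c') / T) := by
    have : exp (c / T₀ - c / T) = exp (c / T₀) * exp (-(c - c') / T) * exp (-c' / T) := by
      rw [← exp_add, ← exp_add]
      ring_nf
    simp only [K, this]
    field_simp
  have hpt : ∀ x ∈ {x | c ≤ U x},
      exp (-U x / T) / ∫ x, exp (-U x / T) ∂μ ≤ K * exp (-U x / T₀) := by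
    intro x hx
    calc exp (-U x / T) / ∫ x, exp (-U x / T) ∂μ ≤ exp (-U x / T) / (v * exp (-c' / T)) :=
          div_le_div_of_nonneg_left (exp_pos _).le (by positivity) hZ
      _ ≤ exp (c / T₀ - c / T) * exp (-U x / T₀) / (v * exp (-c' / T)) := by
          gcongr
          exact exp_neg_div_le_exp_mul_exp_neg_div hx hT hTT₀
      _ = K * exp (-U x / T₀) := by ring
  rw [tilted_apply' μ _ (measurableSet_le measurable_const hU),
    show exp (c / T₀) * (∫ x, exp (-U x / T₀) ∂μ) / v * exp (-(c - c') / T) =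
      ∫ x, K * exp (-U x / T₀) ∂μ by rw [integral_const_mul, hK]; ring,
    ofReal_integral_eq_lintegral_ofReal (hint.const_mul K)
      (ae_of_all _ fun _ => by positivity)]
  calc _ ≤ ∫⁻ x in {x | c ≤ U x}, ENNReal.ofReal (K * exp (-U x / T₀)) ∂μ :=
        setLIntegral_mono (by fun_prop) fun x hx => ENNReal.ofReal_le_ofReal (hpt x hx)
    _ ≤ _ := setLIntegral_le_lintegral _ _

section Laplace

variable {X : Type*} [TopologicalSpace X] [MeasurableSpace X] [OpensMeasurableSpace X]
  {μ : Measure X} [μ.IsOpenPosMeasure] [IsLocallyFiniteMeasure μ] {U : X → ℝ} {x₀ : X}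

lemma exists_pos_mul_exp_le_integral_exp_neg_div (hU : Measurable U)
    (hUx₀ : ContinuousAt U x₀) {c : ℝ} (hc : U x₀ < c) :
    ∃ v, 0 < v ∧ ∀ T, 0 < T → Integrable (fun x => exp (-U x / T)) μ →
      v * exp (-c / T) ≤ ∫ x, exp (-U x / T) ∂μ := by
  obtain ⟨s, hx₀s, hs, hμs⟩ := μ.exists_isOpen_measure_lt_top x₀
  set B := s ∩ U ⁻¹' Iio c
  have hB : MeasurableSet B := hs.measurableSet.inter (hU measurableSet_Iio)
  have hμB : μ B ≠ ⊤ := (measure_mono inter_subset_left).trans_lt hμs |>.ne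
  have hB_nhds : B ∈ 𝓝 x₀ :=
    Filter.inter_mem (hs.mem_nhds hx₀s) (hUx₀.preimage_mem_nhds (Iio_mem_nhds hc))
  refine ⟨μ.real B, ENNReal.toReal_pos (Measure.measure_pos_of_mem_nhds μ hB_nhds).ne' hμB,
    fun T hT hint => ?_⟩
  calc μ.real B * exp (-c / T) = exp (-c / T) * μ.real B := mul_comm _ _
    _ ≤ ∫ x in B, exp (-U x / T) ∂μ :=
        setIntegral_ge_of_const_le_real hB hμB (fun x hx => exp_le_exp.2
          (div_le_div_of_nonneg_right (neg_le_neg hx.2.le) hT.le)) hint.integrableOn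
    _ ≤ ∫ x, exp (-U x / T) ∂μ :=
        setIntegral_le_integral hint (ae_of_all _ fun _ => (exp_pos _).le)

theorem exists_tilted_neg_div_le_mul_exp (hU : Measurable U) (hUx₀ : ContinuousAt U x₀)
    {T₀ : ℝ} (hT₀ : 0 < T₀) (hint : ∀ T, 0 < T → Integrable (fun x => exp (-U x / T)) μ)
    (δ : ℝ) {α : ℝ} (hα : 0 < α) :
    ∃ C, 0 < C ∧ ∀ T, 0 < T → T ≤ T₀ →
      μ.tilted (fun x => -U x / T) {x | U x₀ + δ < U x} ≤
        ENNReal.ofReal (C * exp (-(δ - α) / T)) := by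
  have : Nonempty X := ⟨x₀⟩
  obtain ⟨v, hv, hZ⟩ := exists_pos_mul_exp_le_integral_exp_neg_div (μ := μ) hU hUx₀
    (c := U x₀ + α / 2) (by linarith)
  have hZ₀ := integral_exp_pos (hint T₀ hT₀)
  refine ⟨exp ((U x₀ + δ - α / 2) / T₀) * (∫ x, exp (-U x / T₀) ∂μ) / v, by positivity,
    fun T hT hTT₀ => ?_⟩
  calc μ.tilted _ {x | U x₀ + δ < U x} ≤ μ.tilted _ {x | U x₀ + δ - α / 2 ≤ U x} :=
        measure_mono fun x (hx : U x₀ + δ < U x) =>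
          show U x₀ + δ - α / 2 ≤ U x by linarith
    _ ≤ _ := tilted_neg_div_le_of_mul_exp_le_integral hU hT hTT₀ hv (hint T₀ hT₀)
        (hZ T hT (hint T hT))
    _ = _ := by rw [show U x₀ + δ - α / 2 - (U x₀ + α / 2) = δ - α by ring]

end Laplace

theorem stmt0_general (n m : ℕ)
    (U : (Fin n → ℝ) → ℝ) (hU : ContDiff ℝ (⊤ : ℕ∞) U)
    (abar : Fin n → ℝ) (habar : ∀ i, 0 < abar i)
    (Um : ℝ)
    (hUlow : ∀ x, sqnorm (fun i => abar i * x i) + Um ≤ U x)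
    (x₀ : Fin n → ℝ)
    (δ α T₀ : ℝ) (hα : 0 < α) (hT₀ : 0 < T₀) :
    ∃ Ahat : ℝ, 0 < Ahat ∧ ∀ T : ℝ, 0 < T → T ≤ T₀ →
      muT n m U T {p : St n m | U x₀ + δ < U p.1} ≤
        ENNReal.ofReal (Ahat * Real.exp (-(δ - α) / T)) := by
  have hUc : Continuous U := hU.continuous
  obtain ⟨C, hC, hbound⟩ := exists_tilted_neg_div_le_mul_exp (μ := volume) hUc.measurable
    hUc.continuousAt hT₀ (fun T hT => integrable_exp_neg_div_of_sqnorm_mul_add_le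
      hUc.measurable (fun i => (habar i).ne') hUlow hT) δ hα
  exact ⟨C, hC, fun T hT hTT₀ =>
    (muT_preimage_fst_le hUc.measurable T _).trans (hbound T hT hTT₀)⟩

/-- Laplace principle for the instantaneous equilibrium μ_T. -/
theorem stmt0 (n m : ℕ) (hn : 0 < n) (hm : 0 < m) (hnm : n ≤ m)
    (U : (Fin n → ℝ) → ℝ) (hU : ContDiff ℝ (⊤ : ℕ∞) U)
    (D2 : ℝ) (hD2 : ∀ x, ‖fderiv ℝ (fun y => fderiv ℝ U y) x‖ ≤ D2)
    (abar : Fin n → ℝ) (habar : ∀ i, 0 < abar i)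
    (r1 r2 Ug : ℝ) (hr1 : 0 < r1) (hr2 : 0 < r2) (hUg : 0 < Ug) (Um UM : ℝ)
    (hUlow : ∀ x, sqnorm (fun i => abar i * x i) + Um ≤ U x)
    (hUup : ∀ x, U x ≤ sqnorm (fun i => abar i * x i) + UM)
    (hgrad1 : ∀ x, r1 * sqnorm x - Ug ≤ ∑ i, gradp U x i * x i)
    (hgrad2 : ∀ x, sqnorm (gradp U x) ≤ r2 * sqnorm x + Ug)
    (x₀ : Fin n → ℝ) (hx₀ : ∀ x, U x₀ ≤ U x)
    (δ α T₀ : ℝ) (hδ : 0 < δ) (hα : 0 < α) (hT₀ : 0 < T₀) :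
    ∃ Ahat : ℝ, 0 < Ahat ∧ ∀ T : ℝ, 0 < T → T ≤ T₀ →
      muT n m U T {p : St n m | U x₀ + δ < U p.1} ≤
        ENNReal.ofReal (Ahat * Real.exp (-(δ - α) / T)) :=
  stmt0_general n m U hU abar habar Um hUlow x₀ δ α T₀ hα hT₀
end
end

section
/- There exists δ > 0 small enough — in particular any δ ≤ (A_c/2)·[(|λ|²/(2r₁) + 1 + (r₂/r₁)|λ⁻¹|²)(sup_{t≥0} T_t)² + 2|A|²|λ⁻¹|²]⁻¹, where A_c > 0 is the coercivity constant of A — together with constants a, b, c, d > 0, such that for all t ≥ 0 and all (x,y,z): a(|x|² + |y|² + |z|²) − d ≤ R(x,y,z,T_t) ≤ b(|x|² + |y|² + |z|²) + d, and L_t(R(·,·,·,T_t))(x,y,z) ≤ −c·T_t·R(x,y,z,T_t) + d. -/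
noncomputable section

open Real MeasureTheory Filter

/-!
`R` is the Hamiltonian `W` plus the small cross term `δT (y·λ⁻¹z + x·y/2)`. The Hamiltonian
part of `L_T` conserves `W`, so `L_T W` only sees the friction `-T⁻¹ Aᵀz·z ≤ -(A_c/T)|z|²`
(plus `tr A`). Applied to the cross term, `L_T` produces `-δT|y|²/2` (through `λ⁻¹λ = 1`) and
`-δT ∇U(x)·x/2 ≤ -δT (r₁|x|² - U_g)/2`, so dissipation is transferred from `z` to `y` and `x`.
By Young's inequality the remaining terms cost at most `δT r₁|x|²/4`, `δT|y|²/8` and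
`δ(T + T⁻¹) K |z|²`, with `K` built from Frobenius norms, and the last one is absorbed by the
friction as soon as `δ (1 + sup T²) K ≤ A_c/2`. Since the cross term is small, `R` is comparable to
`|x|² + |y|² + |z|²`, which turns the decay into `-cT R + d`. Every `δ` below a threshold
works, so the bound on `δ` required in the statement can be imposed as well.
-/

open Matrix

section SqNorm
variable {k : ℕ}

lemma sqnorm_nonneg (v : Fin k → ℝ) : 0 ≤ sqnorm v :=
  Finset.sum_nonneg fun _ _ => sq_nonneg _

lemma sqnorm_eq_dotProduct (v : Fin k → ℝ) : sqnorm v = v ⬝ᵥ v := by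
  simp only [sqnorm, dotProduct, sq]

lemma sqnorm_neg (v : Fin k → ℝ) : sqnorm (-v) = sqnorm v := by
  simp [sqnorm]

lemma dotProduct_le_young (v w : Fin k → ℝ) {ε : ℝ} (hε : 0 < ε) :
    v ⬝ᵥ w ≤ ε * sqnorm v + sqnorm w / (4 * ε) := by
  have hterm (i : Fin k) : v i * w i ≤ ε * v i ^ 2 + w i ^ 2 / (4 * ε) := by
    rw [← sub_le_iff_le_add', le_div_iff₀ (by positivity)]
    nlinarith [sq_nonneg (2 * ε * v i - w i)]
  calc v ⬝ᵥ w ≤ ∑ i, (ε * v i ^ 2 + w i ^ 2 / (4 * ε)) := Finset.sum_le_sum fun i _ => hterm i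
    _ = ε * sqnorm v + sqnorm w / (4 * ε) := by
      rw [Finset.sum_add_distrib, ← Finset.mul_sum, ← Finset.sum_div, sqnorm, sqnorm]

lemma abs_dotProduct_le_young (v w : Fin k → ℝ) {ε : ℝ} (hε : 0 < ε) :
    |v ⬝ᵥ w| ≤ ε * sqnorm v + sqnorm w / (4 * ε) := by
  refine abs_le.2 ⟨?_, dotProduct_le_young v w hε⟩
  have h := dotProduct_le_young (-v) w hε
  rw [neg_dotProduct, sqnorm_neg] at h
  linarith

def frobSq {a b : ℕ} (M : Matrix (Fin a) (Fin b) ℝ) : ℝ := ∑ i, ∑ j, M i j ^ 2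

lemma frobSq_nonneg {a b : ℕ} (M : Matrix (Fin a) (Fin b) ℝ) : 0 ≤ frobSq M :=
  Finset.sum_nonneg fun _ _ => Finset.sum_nonneg fun _ _ => sq_nonneg _

lemma sqnorm_mulVec_le {a b : ℕ} (M : Matrix (Fin a) (Fin b) ℝ) (v : Fin b → ℝ) :
    sqnorm (M *ᵥ v) ≤ frobSq M * sqnorm v := by
  calc sqnorm (M *ᵥ v) ≤ ∑ i, (∑ j, M i j ^ 2) * sqnorm v :=
        Finset.sum_le_sum fun i _ => Finset.sum_mul_sq_le_sq_mul_sq Finset.univ (M i) v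
    _ = frobSq M * sqnorm v := by rw [← Finset.sum_mul, frobSq]

lemma sqnorm_vecMul_le {a b : ℕ} (M : Matrix (Fin a) (Fin b) ℝ) (v : Fin a → ℝ) :
    sqnorm (v ᵥ* M) ≤ frobSq Mᵀ * sqnorm v := by
  rw [← mulVec_transpose]; exact sqnorm_mulVec_le _ _

lemma sqnorm_mul_le (a x : Fin k → ℝ) :
    sqnorm (fun i => a i * x i) ≤ sqnorm a * sqnorm x := by
  rw [sqnorm, sqnorm, sqnorm, Finset.mul_sum]
  refine Finset.sum_le_sum fun i hi => ?_
  rw [mul_pow]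
  exact mul_le_mul_of_nonneg_right
    (Finset.single_le_sum (fun j _ => sq_nonneg (a j)) hi) (sq_nonneg _)

lemma exists_pos_mul_sqnorm_le {a : Fin k → ℝ} (ha : ∀ i, 0 < a i) :
    ∃ κ > 0, ∀ x, κ * sqnorm x ≤ sqnorm (fun i => a i * x i) := by
  cases isEmpty_or_nonempty (Fin k) with
  | inl _ => exact ⟨1, one_pos, fun x => by simp [sqnorm]⟩
  | inr _ =>
    obtain ⟨i₀, hi₀⟩ := Finite.exists_min a
    refine ⟨a i₀ ^ 2, pow_pos (ha i₀) 2, fun x => ?_⟩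
    rw [sqnorm, sqnorm, Finset.mul_sum]
    refine Finset.sum_le_sum fun i _ => ?_
    rw [mul_pow]
    gcongr
    · exact (ha i₀).le
    · exact hi₀ i

end SqNorm

section DotProduct
variable {E ι : Type*} [NormedAddCommGroup E] [NormedSpace ℝ E] [Fintype ι]

theorem HasFDerivAt.dotProduct {f g : E → ι → ℝ} {f' g' : E →L[ℝ] ι → ℝ} {x : E}
    (hf : HasFDerivAt f f' x) (hg : HasFDerivAt g g' x) :
    HasFDerivAt (fun y => f y ⬝ᵥ g y)
      (∑ i, (f x i • (ContinuousLinearMap.proj i).comp g'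
        + g x i • (ContinuousLinearMap.proj i).comp f')) x :=
  HasFDerivAt.fun_sum fun i _ => (hasFDerivAt_pi'.1 hf i).mul (hasFDerivAt_pi'.1 hg i)

theorem sum_smul_proj_comp_apply (a b : ι → ℝ) (f' g' : E →L[ℝ] ι → ℝ) (v : E) :
    (∑ i, (a i • (ContinuousLinearMap.proj i).comp g'
      + b i • (ContinuousLinearMap.proj i).comp f')) v = a ⬝ᵥ g' v + b ⬝ᵥ f' v := by
  simp [dotProduct, Finset.sum_add_distrib]

end DotProduct

section StateCoordinates
variable {n m : ℕ} (p : St n m)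

lemma hasFDerivAt_stateX : HasFDerivAt (fun q : St n m => q.1) (ContinuousLinearMap.fst ℝ _ _) p :=
  hasFDerivAt_fst

lemma hasFDerivAt_stateY : HasFDerivAt (fun q : St n m => q.2.1)
    ((ContinuousLinearMap.fst ℝ _ _).comp (ContinuousLinearMap.snd ℝ _ _)) p :=
  hasFDerivAt_snd.fst

lemma hasFDerivAt_stateZ : HasFDerivAt (fun q : St n m => q.2.2)
    ((ContinuousLinearMap.snd ℝ _ _).comp (ContinuousLinearMap.snd ℝ _ _)) p :=
  hasFDerivAt_snd.snd

end StateCoordinates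

lemma fderiv_Rfun_apply {n m : ℕ} {U : (Fin n → ℝ) → ℝ} (hU : Differentiable ℝ U)
    (lamInv : Matrix (Fin n) (Fin m) ℝ) (δ T : ℝ) (p v : St n m) :
    fderiv ℝ (Rfun U lamInv δ T) p v =
      fderiv ℝ U p.1 v.1 + p.2.1 ⬝ᵥ v.2.1 + p.2.2 ⬝ᵥ v.2.2
        + δ * T * (p.2.1 ⬝ᵥ (lamInv *ᵥ v.2.2) + (lamInv *ᵥ p.2.2) ⬝ᵥ v.2.1
          + (p.1 ⬝ᵥ v.2.1 + p.2.1 ⬝ᵥ v.1) / 2) := by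
  have hx := hasFDerivAt_stateX p
  have hy := hasFDerivAt_stateY p
  have hz := hasFDerivAt_stateZ p
  have hMz : HasFDerivAt (fun q : St n m => lamInv *ᵥ q.2.2) _ p :=
    (LinearMap.toContinuousLinearMap lamInv.mulVecLin).hasFDerivAt.comp p hz
  have hR : HasFDerivAt (fun q : St n m => U q.1 + q.2.1 ⬝ᵥ q.2.1 * 2⁻¹ + q.2.2 ⬝ᵥ q.2.2 * 2⁻¹
      + δ * T * (q.2.1 ⬝ᵥ (lamInv *ᵥ q.2.2) + q.1 ⬝ᵥ q.2.1 * 2⁻¹)) _ p :=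
    ((((hU p.1).hasFDerivAt.comp p hx).add (HasFDerivAt.mul_const (hy.dotProduct hy) 2⁻¹)).add
      (HasFDerivAt.mul_const (hz.dotProduct hz) 2⁻¹)).add
      (HasFDerivAt.const_mul
        ((hy.dotProduct hMz).add (HasFDerivAt.mul_const (hx.dotProduct hy) 2⁻¹)) (δ * T))
  have hfun : Rfun U lamInv δ T = fun q => U q.1 + q.2.1 ⬝ᵥ q.2.1 * 2⁻¹ + q.2.2 ⬝ᵥ q.2.2 * 2⁻¹
      + δ * T * (q.2.1 ⬝ᵥ (lamInv *ᵥ q.2.2) + q.1 ⬝ᵥ q.2.1 * 2⁻¹) := by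
    funext q
    simp only [Rfun, Wfun, sqnorm_eq_dotProduct, div_eq_mul_inv]
    rfl
  rw [hfun, hR.fderiv]
  simp only [_root_.add_apply, _root_.smul_apply, ContinuousLinearMap.comp_apply,
    sum_smul_proj_comp_apply, ContinuousLinearMap.coe_fst', ContinuousLinearMap.coe_snd',
    LinearMap.coe_toContinuousLinearMap', Matrix.mulVecLin_apply, smul_eq_mul]
  ring

section Partials
variable {n m : ℕ} {U : (Fin n → ℝ) → ℝ} (hU : Differentiable ℝ U)
  (lamInv : Matrix (Fin n) (Fin m) ℝ) (δ T : ℝ) (p : St n m)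
include hU

lemma pX_Rfun (i : Fin n) :
    pX (Rfun U lamInv δ T) i p = gradp U p.1 i + δ * T * (p.2.1 i / 2) := by
  simp [pX, fderiv_Rfun_apply hU, gradp]

lemma pY_Rfun (i : Fin n) :
    pY (Rfun U lamInv δ T) i p = p.2.1 i + δ * T * ((lamInv *ᵥ p.2.2) i + p.1 i / 2) := by
  simp [pY, fderiv_Rfun_apply hU]

lemma pZ_Rfun (j : Fin m) :
    pZ (Rfun U lamInv δ T) j p = p.2.2 j + δ * T * (p.2.1 ᵥ* lamInv) j := by
  simp only [pZ, fderiv_Rfun_apply hU, map_zero, dotProduct_zero, add_zero, zero_add,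
    Matrix.dotProduct_mulVec, dotProduct_single, mul_one, zero_div]

lemma pZ_pZ_Rfun (i j : Fin m) :
    pZ (fun q => pZ (Rfun U lamInv δ T) j q) i p = (1 : Matrix (Fin m) (Fin m) ℝ) i j := by
  have h : HasFDerivAt (fun q : St n m => q.2.2 j + δ * T * (q.2.1 ⬝ᵥ lamInv.col j)) _ p :=
    (hasFDerivAt_pi'.1 (hasFDerivAt_stateZ p) j).add
      (((hasFDerivAt_stateY p).dotProduct (hasFDerivAt_const _ _)).const_mul (δ * T))
  have hfun : (fun q => pZ (Rfun U lamInv δ T) j q)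
      = fun q : St n m => q.2.2 j + δ * T * (q.2.1 ⬝ᵥ lamInv.col j) :=
    funext fun q => by rw [pZ_Rfun hU]; rfl
  rw [pZ, hfun, h.fderiv]
  simp [Pi.single_apply, Matrix.one_apply, eq_comm]

end Partials

lemma genL_Rfun_eq {n m : ℕ} {U : (Fin n → ℝ) → ℝ} (hU : Differentiable ℝ U)
    (A : Matrix (Fin m) (Fin m) ℝ) (lam : Matrix (Fin m) (Fin n) ℝ)
    {lamInv : Matrix (Fin n) (Fin m) ℝ} (hlamInv : lamInv * lam = 1)
    (δ : ℝ) {T : ℝ} (hT : T ≠ 0) (p : St n m) :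
    genL U A lam T (Rfun U lamInv δ T) p =
      -(δ * T) * (sqnorm p.2.1 / 2 + gradp U p.1 ⬝ᵥ (lamInv *ᵥ p.2.2) + gradp U p.1 ⬝ᵥ p.1 / 2
        - (lamᵀ *ᵥ p.2.2) ⬝ᵥ (lamInv *ᵥ p.2.2) - (lamᵀ *ᵥ p.2.2) ⬝ᵥ p.1 / 2)
      - T⁻¹ * ((Aᵀ *ᵥ p.2.2) ⬝ᵥ p.2.2) - δ * ((Aᵀ *ᵥ p.2.2) ⬝ᵥ (p.2.1 ᵥ* lamInv)) + A.trace := by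
  have hX : (fun i => pX (Rfun U lamInv δ T) i p) = gradp U p.1 + (δ * T / 2) • p.2.1 := by
    ext i
    simp only [pX_Rfun hU, Pi.add_apply, Pi.smul_apply, smul_eq_mul]
    ring
  have hY : (fun i => pY (Rfun U lamInv δ T) i p)
      = p.2.1 + (δ * T) • (lamInv *ᵥ p.2.2 + (2⁻¹ : ℝ) • p.1) := by
    ext i
    simp only [pY_Rfun hU, Pi.add_apply, Pi.smul_apply, smul_eq_mul]
    ring
  have hZ : (fun j => pZ (Rfun U lamInv δ T) j p) = p.2.2 + (δ * T) • (p.2.1 ᵥ* lamInv) := by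
    ext j; simp [pZ_Rfun hU]
  have hZZ : ∑ i, ∑ j, A i j * pZ (fun q => pZ (Rfun U lamInv δ T) j q) i p = A.trace := by
    simp [pZ_pZ_Rfun hU, Matrix.one_apply, Matrix.trace]
  have hswap : (lamᵀ *ᵥ p.2.2) ⬝ᵥ p.2.1 = (lam *ᵥ p.2.1) ⬝ᵥ p.2.2 := by
    rw [mulVec_transpose, ← dotProduct_mulVec, dotProduct_comm]
  -- the source of the dissipation `-δT|y|²/2` in `y`
  have hinv : (lam *ᵥ p.2.1) ⬝ᵥ (p.2.1 ᵥ* lamInv) = p.2.1 ⬝ᵥ p.2.1 := by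
    rw [dotProduct_comm, ← dotProduct_mulVec, mulVec_mulVec, hlamInv, one_mulVec]
  -- `genL` unfolds to dot products with the three partial gradients
  change p.2.1 ⬝ᵥ (fun i => pX (Rfun U lamInv δ T) i p)
      - gradp U p.1 ⬝ᵥ (fun i => pY (Rfun U lamInv δ T) i p)
      + (lamᵀ *ᵥ p.2.2) ⬝ᵥ (fun i => pY (Rfun U lamInv δ T) i p)
      - (lam *ᵥ p.2.1) ⬝ᵥ (fun j => pZ (Rfun U lamInv δ T) j p)
      - T⁻¹ * ((Aᵀ *ᵥ p.2.2) ⬝ᵥ (fun j => pZ (Rfun U lamInv δ T) j p))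
      + ∑ i, ∑ j, A i j * pZ (fun q => pZ (Rfun U lamInv δ T) j q) i p = _
  rw [hX, hY, hZ, hZZ, sqnorm_eq_dotProduct]
  simp only [dotProduct_add, dotProduct_smul, smul_eq_mul, hswap, hinv]
  rw [dotProduct_comm p.2.1 (gradp U p.1)]
  field_simp
  ring

def stateSqnorm {n m : ℕ} (p : St n m) : ℝ := sqnorm p.1 + sqnorm p.2.1 + sqnorm p.2.2

lemma stateSqnorm_nonneg {n m : ℕ} (p : St n m) : 0 ≤ stateSqnorm p :=
  add_nonneg (add_nonneg (sqnorm_nonneg _) (sqnorm_nonneg _)) (sqnorm_nonneg _)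

def crossTerm {n m : ℕ} (lamInv : Matrix (Fin n) (Fin m) ℝ) (p : St n m) : ℝ :=
  p.2.1 ⬝ᵥ (lamInv *ᵥ p.2.2) + p.1 ⬝ᵥ p.2.1 / 2

section LyapunovBounds
variable {n m : ℕ} {U : (Fin n → ℝ) → ℝ} (lamInv : Matrix (Fin n) (Fin m) ℝ)

lemma Rfun_eq_add (δ T : ℝ) (p : St n m) :
    Rfun U lamInv δ T p
      = U p.1 + sqnorm p.2.1 / 2 + sqnorm p.2.2 / 2 + δ * T * crossTerm lamInv p := rfl

lemma abs_crossTerm_le (p : St n m) :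
    |crossTerm lamInv p| ≤ (1 + frobSq lamInv) * stateSqnorm p := by
  have hyz := abs_dotProduct_le_young p.2.1 (lamInv *ᵥ p.2.2) (ε := 1 / 2) (by norm_num)
  have hxy := abs_dotProduct_le_young p.1 p.2.1 (ε := 1 / 2) (by norm_num)
  have hMz := sqnorm_mulVec_le lamInv p.2.2
  have hF := frobSq_nonneg lamInv
  have hx := sqnorm_nonneg p.1
  have hy := sqnorm_nonneg p.2.1
  have hz := sqnorm_nonneg p.2.2
  rw [stateSqnorm, crossTerm]
  calc _ ≤ |p.2.1 ⬝ᵥ (lamInv *ᵥ p.2.2)| + |p.1 ⬝ᵥ p.2.1| / 2 := by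
        rw [← abs_two, ← abs_div, abs_two]; exact abs_add_le _ _
    _ ≤ _ := by nlinarith

lemma le_Rfun_and_Rfun_le {κ β Um UM δ T : ℝ} (hκ : κ ≤ 1 / 2) (hβ : 0 ≤ β)
    (hlow : ∀ x, κ * sqnorm x + Um ≤ U x) (hup : ∀ x, U x ≤ β * sqnorm x + UM)
    (hsmall : |δ * T| * (1 + frobSq lamInv) ≤ κ / 2) (p : St n m) :
    κ / 2 * stateSqnorm p + Um ≤ Rfun U lamInv δ T p ∧
      Rfun U lamInv δ T p ≤ (β + 1) * stateSqnorm p + UM := by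
  have hcross : |δ * T * crossTerm lamInv p| ≤ κ / 2 * stateSqnorm p := by
    rw [abs_mul]
    calc _ ≤ |δ * T| * ((1 + frobSq lamInv) * stateSqnorm p) :=
          mul_le_mul_of_nonneg_left (abs_crossTerm_le lamInv p) (abs_nonneg _)
      _ ≤ κ / 2 * stateSqnorm p := by
          rw [← mul_assoc]; exact mul_le_mul_of_nonneg_right hsmall (stateSqnorm_nonneg p)
  have hx := sqnorm_nonneg p.1
  have hy := sqnorm_nonneg p.2.1
  have hz := sqnorm_nonneg p.2.2
  rw [Rfun_eq_add]
  rw [stateSqnorm] at hcross ⊢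
  constructor
  · nlinarith [hlow p.1, neg_abs_le (δ * T * crossTerm lamInv p)]
  · nlinarith [hup p.1, le_abs_self (δ * T * crossTerm lamInv p)]

end LyapunovBounds

lemma neg_grad_dotProduct_le {k : ℕ} {r1 r2 Ug : ℝ} (hr1 : 0 < r1) (hr2 : 0 < r2)
    {g x : Fin k → ℝ} (h1 : r1 * sqnorm x - Ug ≤ g ⬝ᵥ x) (h2 : sqnorm g ≤ r2 * sqnorm x + Ug)
    (w : Fin k → ℝ) :
    -(g ⬝ᵥ w) - g ⬝ᵥ x / 2
      ≤ -(3 * r1 / 8) * sqnorm x + 2 * r2 / r1 * sqnorm w + (1 / 2 + r1 / (8 * r2)) * Ug := by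
  have hε : 0 < r1 / (8 * r2) := by positivity
  have hyoung := abs_dotProduct_le_young g w hε
  have hg : r1 / (8 * r2) * sqnorm g ≤ r1 / (8 * r2) * (r2 * sqnorm x + Ug) :=
    mul_le_mul_of_nonneg_left h2 hε.le
  have hgx : r1 / (8 * r2) * (r2 * sqnorm x + Ug) = r1 / 8 * sqnorm x + r1 / (8 * r2) * Ug := by
    field_simp
  have hw : sqnorm w / (4 * (r1 / (8 * r2))) = 2 * r2 / r1 * sqnorm w := by field_simp; ring
  linarith [neg_abs_le (g ⬝ᵥ w)]

lemma le_grad_dotProduct_sub {k : ℕ} {r1 r2 Ug L Λ Z : ℝ} (hr1 : 0 < r1) (hr2 : 0 < r2)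
    {g x w v : Fin k → ℝ} (h1 : r1 * sqnorm x - Ug ≤ g ⬝ᵥ x) (h2 : sqnorm g ≤ r2 * sqnorm x + Ug)
    (hw : sqnorm w ≤ L * Z) (hv : sqnorm v ≤ Λ * Z) :
    r1 / 4 * sqnorm x - (2 * r2 / r1 * L + (1 / 2 + 1 / (2 * r1)) * Λ + L / 2) * Z
        - (1 / 2 + r1 / (8 * r2)) * Ug
      ≤ g ⬝ᵥ w + g ⬝ᵥ x / 2 - v ⬝ᵥ w - v ⬝ᵥ x / 2 := by
  have hgrad := neg_grad_dotProduct_le hr1 hr2 h1 h2 w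
  have hvw := dotProduct_le_young v w (ε := 1 / 2) (by norm_num)
  have hvx := dotProduct_le_young x v (ε := r1 / 4) (by positivity)
  rw [dotProduct_comm] at hvx
  have hw' : 2 * r2 / r1 * sqnorm w ≤ 2 * r2 / r1 * (L * Z) :=
    mul_le_mul_of_nonneg_left hw (by positivity)
  have hv' : sqnorm v / (4 * (r1 / 4)) ≤ Λ * Z / r1 := by
    rw [show 4 * (r1 / 4) = r1 by ring]; exact div_le_div_of_nonneg_right hv hr1.le
  have hK : (2 * r2 / r1 * L + (1 / 2 + 1 / (2 * r1)) * Λ + L / 2) * Z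
      = 2 * r2 / r1 * (L * Z) + Λ * Z / 2 + Λ * Z / r1 / 2 + L * Z / 2 := by ring
  linarith

lemma abs_dotProduct_le_of_sqnorm_le {k : ℕ} {a b : Fin k → ℝ} {α β X Y τ : ℝ} (hτ : 0 < τ)
    (hβ : 0 ≤ β) (hY : 0 ≤ Y) (ha : sqnorm a ≤ α * X) (hb : sqnorm b ≤ β * Y) :
    |a ⬝ᵥ b| ≤ τ / 8 * Y + τ⁻¹ * (2 * (β + 1) * α) * X := by
  have hε : 0 < 2 * (β + 1) / τ := by positivity
  have h := abs_dotProduct_le_young a b hε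
  have ha' : 2 * (β + 1) / τ * sqnorm a ≤ τ⁻¹ * (2 * (β + 1) * α) * X := by
    calc _ ≤ 2 * (β + 1) / τ * (α * X) := mul_le_mul_of_nonneg_left ha hε.le
      _ = _ := by ring
  have hb' : sqnorm b / (4 * (2 * (β + 1) / τ)) ≤ τ / 8 * Y := by
    rw [div_le_iff₀ (by positivity)]
    calc _ ≤ β * Y := hb
      _ ≤ _ := by field_simp; nlinarith
  linarith

section Drift
variable {n m : ℕ} {U : (Fin n → ℝ) → ℝ} (A : Matrix (Fin m) (Fin m) ℝ)
  (lam : Matrix (Fin m) (Fin n) ℝ) {lamInv : Matrix (Fin n) (Fin m) ℝ}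

lemma exists_genL_Rfun_le (hU : Differentiable ℝ U) (hlamInv : lamInv * lam = 1)
    {r1 r2 Ug Ac : ℝ} (hr1 : 0 < r1) (hr2 : 0 < r2) (hUg : 0 < Ug)
    (hgrad1 : ∀ x, r1 * sqnorm x - Ug ≤ gradp U x ⬝ᵥ x)
    (hgrad2 : ∀ x, sqnorm (gradp U x) ≤ r2 * sqnorm x + Ug)
    (hApd : ∀ v, Ac * sqnorm v ≤ v ⬝ᵥ (A *ᵥ v)) :
    ∃ K C : ℝ, 0 < K ∧ 0 ≤ C ∧ ∀ δ τ : ℝ, 0 ≤ δ → 0 < τ → ∀ p : St n m,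
      genL U A lam τ (Rfun U lamInv δ τ) p
        ≤ -(δ * τ) * (r1 * sqnorm p.1 + sqnorm p.2.1) / 4 + δ * (τ + τ⁻¹) * K * sqnorm p.2.2
          - τ⁻¹ * Ac * sqnorm p.2.2 + δ * τ * C + A.trace := by
  have hL := frobSq_nonneg lamInv
  have hΛ := frobSq_nonneg lamᵀ
  have hLt := frobSq_nonneg lamInvᵀ
  have hα := frobSq_nonneg Aᵀ
  refine ⟨(2 * r2 / r1 * frobSq lamInv + (1 / 2 + 1 / (2 * r1)) * frobSq lamᵀ + frobSq lamInv / 2)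
      + 2 * (frobSq lamInvᵀ + 1) * frobSq Aᵀ + 1,
    (1 / 2 + r1 / (8 * r2)) * Ug, by positivity, by positivity, fun δ τ hδ hτ ⟨x, y, z⟩ => ?_⟩
  rw [genL_Rfun_eq hU A lam hlamInv δ hτ.ne']
  dsimp only
  have hx := sqnorm_nonneg x
  have hy := sqnorm_nonneg y
  have hz := sqnorm_nonneg z
  have hbracket := le_grad_dotProduct_sub hr1 hr2 (hgrad1 x) (hgrad2 x)
    (sqnorm_mulVec_le lamInv z) (sqnorm_mulVec_le lamᵀ z)
  have hfriction : Ac * sqnorm z ≤ (Aᵀ *ᵥ z) ⬝ᵥ z := by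
    rw [mulVec_transpose, ← dotProduct_mulVec]; exact hApd z
  have hab := abs_dotProduct_le_of_sqnorm_le hτ hLt hy
    (sqnorm_mulVec_le Aᵀ z) (sqnorm_vecMul_le lamInv y)
  set K₁ := 2 * r2 / r1 * frobSq lamInv + (1 / 2 + 1 / (2 * r1)) * frobSq lamᵀ + frobSq lamInv / 2
  set K₂ := 2 * (frobSq lamInvᵀ + 1) * frobSq Aᵀ
  have hK₁ : 0 ≤ K₁ := by positivity
  have hK₂ : 0 ≤ K₂ := by positivity
  have h₁ := mul_le_mul_of_nonneg_left hbracket (mul_nonneg hδ hτ.le)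
  have h₂ := mul_le_mul_of_nonneg_left hfriction (inv_nonneg.2 hτ.le)
  have h₃ := mul_le_mul_of_nonneg_left (neg_le_of_abs_le hab) hδ
  have h₄ : 0 ≤ δ * τ * sqnorm y := by positivity
  have h₅ : 0 ≤ δ * τ * ((K₂ + 1) * sqnorm z) := by positivity
  have h₆ : 0 ≤ δ * τ⁻¹ * ((K₁ + 1) * sqnorm z) := by positivity
  linarith

end Drift

lemma driftCoeffZ_le {δ τ Ts K Ac : ℝ} (hδ : 0 ≤ δ) (hK : 0 ≤ K) (hτ : 0 < τ) (hτTs : τ ≤ Ts)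
    (hsmall : δ * ((1 + Ts ^ 2) * K) ≤ Ac / 2) :
    δ * (τ + τ⁻¹) * K - τ⁻¹ * Ac ≤ -(τ * (Ac / (2 * Ts ^ 2))) := by
  have hTs : 0 < Ts := hτ.trans_le hτTs
  have hAc : 0 ≤ Ac / 2 := le_trans (by positivity) hsmall
  have hexpand : δ * (τ + τ⁻¹) * K = τ⁻¹ * (δ * ((1 + τ ^ 2) * K)) := by field_simp; ring
  have hτ2 : δ * ((1 + τ ^ 2) * K) ≤ Ac / 2 := le_trans (by gcongr) hsmall
  have hinv : τ * (Ac / (2 * Ts ^ 2)) ≤ τ⁻¹ * (Ac / 2) := by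
    rw [show τ * (Ac / (2 * Ts ^ 2)) = τ ^ 2 / Ts ^ 2 * (τ⁻¹ * (Ac / 2)) by field_simp]
    exact mul_le_of_le_one_left (by positivity) (div_le_one_of_le₀ (by gcongr) (by positivity))
  have := mul_le_mul_of_nonneg_left hτ2 (inv_nonneg.2 hτ.le)
  linarith

lemma drift_bound_le {δ τ Ts K C Ac r1 c₀ tr X Y Z : ℝ} (hδ : 0 ≤ δ) (hK : 0 ≤ K) (hC : 0 ≤ C)
    (hτ : 0 < τ) (hτTs : τ ≤ Ts) (hsmall : δ * ((1 + Ts ^ 2) * K) ≤ Ac / 2)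
    (hX : 0 ≤ X) (hY : 0 ≤ Y) (hZ : 0 ≤ Z)
    (hc₀X : c₀ ≤ δ * r1 / 4) (hc₀Y : c₀ ≤ δ / 4) (hc₀Z : c₀ ≤ Ac / (2 * Ts ^ 2)) :
    -(δ * τ) * (r1 * X + Y) / 4 + δ * (τ + τ⁻¹) * K * Z - τ⁻¹ * Ac * Z + δ * τ * C + tr
      ≤ -(τ * c₀) * (X + Y + Z) + (δ * Ts * C + |tr|) := by
  have hZc := mul_le_mul_of_nonneg_right (driftCoeffZ_le hδ hK hτ hτTs hsmall) hZ
  have hXc : τ * c₀ * X ≤ τ * (δ * r1 / 4) * X := by gcongr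
  have hYc : τ * c₀ * Y ≤ τ * (δ / 4) * Y := by gcongr
  have hZc' : τ * c₀ * Z ≤ τ * (Ac / (2 * Ts ^ 2)) * Z := by gcongr
  have hCc : δ * τ * C ≤ δ * Ts * C := by gcongr
  linarith [le_abs_self tr]

lemma le_neg_mul_add_of_le_mul_add {G R N τ Ts c₀ b M D : ℝ} (hc₀ : 0 ≤ c₀) (hb : 0 < b)
    (hτ : 0 ≤ τ) (hτTs : τ ≤ Ts) (hG : G ≤ -(τ * c₀) * N + D) (hR : R ≤ b * N + M) :
    G ≤ -(c₀ / b * τ) * R + (c₀ / b * Ts * |M| + D) := by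
  have hRN : c₀ / b * (R - M) ≤ c₀ * N := by
    calc _ ≤ c₀ / b * (b * N) := by gcongr; linarith
      _ = c₀ * N := by field_simp
  have hτRN := mul_le_mul_of_nonneg_left hRN hτ
  have hM : c₀ / b * τ * M ≤ c₀ / b * Ts * |M| := by
    calc _ ≤ c₀ / b * τ * |M| := by gcongr; exact le_abs_self M
      _ ≤ _ := by gcongr
  linarith

theorem bddAbove_image_Ici_of_tendsto {f : ℝ → ℝ} (hf : Continuous f) {l : ℝ}
    (hlim : Tendsto f atTop (nhds l)) (a : ℝ) : BddAbove (f '' Set.Ici a) := by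
  obtain ⟨t₀, ht₀⟩ := eventually_atTop.1 (hlim.eventually (eventually_le_nhds (lt_add_one l)))
  have hsub : f '' Set.Ici a ⊆ f '' Set.Icc a t₀ ∪ Set.Iic (l + 1) := by
    rintro _ ⟨t, ht, rfl⟩
    rcases le_total t t₀ with h | h
    · exact Or.inl ⟨t, ⟨ht, h⟩, rfl⟩
    · exact Or.inr (ht₀ t h)
  exact ((isCompact_Icc.image hf).bddAbove.union bddAbove_Iic).mono hsub

theorem exists_Rfun_lyapunov {n m : ℕ} {U : (Fin n → ℝ) → ℝ} (hU : Differentiable ℝ U)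
    (A : Matrix (Fin m) (Fin m) ℝ) (lam : Matrix (Fin m) (Fin n) ℝ)
    {lamInv : Matrix (Fin n) (Fin m) ℝ} (hlamInv : lamInv * lam = 1)
    {κ β Um UM r1 r2 Ug Ac Ts : ℝ} (hκ : 0 < κ) (hκ' : κ ≤ 1 / 2) (hβ : 0 ≤ β)
    (hlow : ∀ x, κ * sqnorm x + Um ≤ U x) (hup : ∀ x, U x ≤ β * sqnorm x + UM)
    (hr1 : 0 < r1) (hr2 : 0 < r2) (hUg : 0 < Ug)
    (hgrad1 : ∀ x, r1 * sqnorm x - Ug ≤ gradp U x ⬝ᵥ x)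
    (hgrad2 : ∀ x, sqnorm (gradp U x) ≤ r2 * sqnorm x + Ug)
    (hAc : 0 < Ac) (hApd : ∀ v, Ac * sqnorm v ≤ v ⬝ᵥ (A *ᵥ v)) (hTs : 0 < Ts) :
    ∃ δ₁ > 0, ∀ δ, 0 < δ → δ ≤ δ₁ → ∃ a b c d : ℝ, 0 < a ∧ 0 < b ∧ 0 < c ∧ 0 < d ∧
      ∀ τ, 0 < τ → τ ≤ Ts → ∀ p : St n m,
        (a * stateSqnorm p - d ≤ Rfun U lamInv δ τ p ∧
          Rfun U lamInv δ τ p ≤ b * stateSqnorm p + d) ∧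
        genL U A lam τ (Rfun U lamInv δ τ) p ≤ -(c * τ) * Rfun U lamInv δ τ p + d := by
  obtain ⟨K, C, hK, hC, hdrift⟩ :=
    exists_genL_Rfun_le A lam hU hlamInv hr1 hr2 hUg hgrad1 hgrad2 hApd
  have hF : 0 < 1 + frobSq lamInv := by linarith [frobSq_nonneg lamInv]
  refine ⟨min (κ / 2 / (Ts * (1 + frobSq lamInv))) (Ac / 2 / ((1 + Ts ^ 2) * K)),
    by positivity, fun δ hδ hδ₁ => ?_⟩
  have hδR : δ * (Ts * (1 + frobSq lamInv)) ≤ κ / 2 :=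
    (le_div_iff₀ (by positivity)).1 (hδ₁.trans (min_le_left _ _))
  have hδL : δ * ((1 + Ts ^ 2) * K) ≤ Ac / 2 :=
    (le_div_iff₀ (by positivity)).1 (hδ₁.trans (min_le_right _ _))
  set c₀ := min (δ * min r1 1 / 4) (Ac / (2 * Ts ^ 2))
  have hc₀ : 0 < c₀ := by positivity
  have hc₀X : c₀ ≤ δ * r1 / 4 := (min_le_left _ _).trans (by gcongr; exact min_le_left _ _)
  have hc₀Y : c₀ ≤ δ / 4 :=
    (min_le_left _ _).trans (by linarith [mul_le_mul_of_nonneg_left (min_le_right r1 1) hδ.le])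
  have hc₀Z : c₀ ≤ Ac / (2 * Ts ^ 2) := min_le_right _ _
  set d := 1 + |Um| + |UM| + c₀ / (β + 1) * Ts * |UM| + δ * Ts * C + |A.trace|
  have hrest : 0 ≤ c₀ / (β + 1) * Ts * |UM| + δ * Ts * C + |A.trace| := by positivity
  have hd : 0 < d := by positivity
  refine ⟨κ / 2, β + 1, c₀ / (β + 1), d, by positivity, by positivity, by positivity, hd,
    fun τ hτ hτTs p => ?_⟩
  have hsmall : |δ * τ| * (1 + frobSq lamInv) ≤ κ / 2 := by
    rw [abs_of_pos (by positivity), mul_assoc]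
    exact le_trans (by gcongr) hδR
  obtain ⟨hRlow, hRup⟩ := le_Rfun_and_Rfun_le lamInv hκ' hβ hlow hup hsmall p
  refine ⟨⟨by linarith [neg_abs_le Um, abs_nonneg UM], by linarith [le_abs_self UM, abs_nonneg Um]⟩,
    ?_⟩
  have hdecay : genL U A lam τ (Rfun U lamInv δ τ) p
      ≤ -(τ * c₀) * stateSqnorm p + (δ * Ts * C + |A.trace|) :=
    (hdrift δ τ hδ.le hτ p).trans (drift_bound_le hδ.le hK.le hC hτ hτTs hδL
      (sqnorm_nonneg _) (sqnorm_nonneg _) (sqnorm_nonneg _) hc₀X hc₀Y hc₀Z)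
  have := le_neg_mul_add_of_le_mul_add hc₀.le (by positivity) hτ.le hτTs hdecay hRup
  linarith [abs_nonneg Um, abs_nonneg UM]

theorem stmt1_general (n m : ℕ)
    (U : (Fin n → ℝ) → ℝ) (hU : ContDiff ℝ (⊤ : ℕ∞) U)
    (abar : Fin n → ℝ) (habar : ∀ i, 0 < abar i)
    (r1 r2 Ug : ℝ) (hr1 : 0 < r1) (hr2 : 0 < r2) (hUg : 0 < Ug) (Um UM : ℝ)
    (hUlow : ∀ x, sqnorm (fun i => abar i * x i) + Um ≤ U x)
    (hUup : ∀ x, U x ≤ sqnorm (fun i => abar i * x i) + UM)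
    (hgrad1 : ∀ x, r1 * sqnorm x - Ug ≤ ∑ i, gradp U x i * x i)
    (hgrad2 : ∀ x, sqnorm (gradp U x) ≤ r2 * sqnorm x + Ug)
    (A : Matrix (Fin m) (Fin m) ℝ) (Ac : ℝ) (hAc : 0 < Ac)
    (hApd : ∀ v : Fin m → ℝ, Ac * sqnorm v ≤ ∑ j, v j * A.mulVec v j)
    (lam : Matrix (Fin m) (Fin n) ℝ) (lamInv : Matrix (Fin n) (Fin m) ℝ)
    (hlamInv : lamInv * lam = 1)
    (T : ℝ → ℝ) (hTpos : ∀ t, 0 < T t) (hTdiff : ContDiff ℝ 1 T)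
    (hTlim : Tendsto T atTop (nhds 0))
    :
    ∃ δ : ℝ, 0 < δ ∧
      δ ≤ Ac / 2 * ((opNorm lam ^ 2 / (2 * r1) + 1 + r2 / r1 * opNorm lamInv ^ 2) *
          (sSup (T '' Set.Ici 0)) ^ 2 + 2 * opNorm A ^ 2 * opNorm lamInv ^ 2)⁻¹ ∧
      ∃ a b c d : ℝ, 0 < a ∧ 0 < b ∧ 0 < c ∧ 0 < d ∧
        ∀ t : ℝ, 0 ≤ t → ∀ p : St n m,
          (a * (sqnorm p.1 + sqnorm p.2.1 + sqnorm p.2.2) - d ≤ Rfun U lamInv δ (T t) p ∧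
            Rfun U lamInv δ (T t) p ≤ b * (sqnorm p.1 + sqnorm p.2.1 + sqnorm p.2.2) + d) ∧
          genL U A lam (T t) (Rfun U lamInv δ (T t)) p ≤
            -(c * T t) * Rfun U lamInv δ (T t) p + d := by
  have hTle (t : ℝ) (ht : 0 ≤ t) : T t ≤ sSup (T '' Set.Ici 0) :=
    le_csSup (bddAbove_image_Ici_of_tendsto hTdiff.continuous hTlim 0) ⟨t, ht, rfl⟩
  have hTs : 0 < sSup (T '' Set.Ici 0) := (hTpos 0).trans_le (hTle 0 le_rfl)
  obtain ⟨κ, hκ, hκabar⟩ := exists_pos_mul_sqnorm_le habar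
  have hlow (x : Fin n → ℝ) : min κ (1 / 2) * sqnorm x + Um ≤ U x :=
    le_trans (by gcongr; exact (mul_le_mul_of_nonneg_right (min_le_left _ _)
      (sqnorm_nonneg x)).trans (hκabar x)) (hUlow x)
  have hup (x : Fin n → ℝ) : U x ≤ sqnorm abar * sqnorm x + UM :=
    (hUup x).trans (by gcongr; exact sqnorm_mul_le abar x)
  obtain ⟨δ₁, hδ₁, hlyap⟩ := exists_Rfun_lyapunov (hU.differentiable (by simp)) A lam hlamInv
    (lt_min hκ (by norm_num)) (min_le_right _ _) (sqnorm_nonneg abar) hlow hup hr1 hr2 hUg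
    hgrad1 hgrad2 hAc hApd hTs
  set B := Ac / 2 * ((opNorm lam ^ 2 / (2 * r1) + 1 + r2 / r1 * opNorm lamInv ^ 2) *
    (sSup (T '' Set.Ici 0)) ^ 2 + 2 * opNorm A ^ 2 * opNorm lamInv ^ 2)⁻¹
  have hB : 0 < B := by positivity
  obtain ⟨a, b, c, d, ha, hb, hc, hd, hR⟩ := hlyap (min B δ₁) (lt_min hB hδ₁) (min_le_right _ _)
  exact ⟨min B δ₁, lt_min hB hδ₁, min_le_left _ _, a, b, c, d, ha, hb, hc, hd,
    fun t ht => hR (T t) (hTpos t) (hTle t ht)⟩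

/-- Lyapunov function for the annealed generalised Langevin generator. -/
theorem stmt1 (n m : ℕ) (hn : 0 < n) (hm : 0 < m) (hnm : n ≤ m)
    (U : (Fin n → ℝ) → ℝ) (hU : ContDiff ℝ (⊤ : ℕ∞) U)
    (D2 : ℝ) (hD2 : ∀ x, ‖fderiv ℝ (fun y => fderiv ℝ U y) x‖ ≤ D2)
    (abar : Fin n → ℝ) (habar : ∀ i, 0 < abar i)
    (r1 r2 Ug : ℝ) (hr1 : 0 < r1) (hr2 : 0 < r2) (hUg : 0 < Ug) (Um UM : ℝ)
    (hUlow : ∀ x, sqnorm (fun i => abar i * x i) + Um ≤ U x)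
    (hUup : ∀ x, U x ≤ sqnorm (fun i => abar i * x i) + UM)
    (hgrad1 : ∀ x, r1 * sqnorm x - Ug ≤ ∑ i, gradp U x i * x i)
    (hgrad2 : ∀ x, sqnorm (gradp U x) ≤ r2 * sqnorm x + Ug)
    (A : Matrix (Fin m) (Fin m) ℝ) (Ac : ℝ) (hAc : 0 < Ac)
    (hApd : ∀ v : Fin m → ℝ, Ac * sqnorm v ≤ ∑ j, v j * A.mulVec v j)
    (lam : Matrix (Fin m) (Fin n) ℝ) (lamInv : Matrix (Fin n) (Fin m) ℝ)
    (hlamInv : lamInv * lam = 1)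
    (T : ℝ → ℝ) (hTpos : ∀ t, 0 < T t) (hTdiff : ContDiff ℝ 1 T)
    (hTlim : Tendsto T atTop (nhds 0))
    (E : ℝ) (hE : UM - Um < E)
    (hTlb : ∀ᶠ t in atTop, E / Real.log t ≤ T t)
    (Ttil : ℝ) (hTtil : 0 < Ttil)
    (hTder : ∀ᶠ t in atTop, -(Ttil / t) ≤ deriv T t ∧ deriv T t ≤ 0)
    (δ₀ : ℝ) (hδ₀ : 0 < δ₀) (hTconst : ∀ t ∈ Set.Icc (0:ℝ) δ₀, T t = T 0)
    :
    ∃ δ : ℝ, 0 < δ ∧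
      δ ≤ Ac / 2 * ((opNorm lam ^ 2 / (2 * r1) + 1 + r2 / r1 * opNorm lamInv ^ 2) *
          (sSup (T '' Set.Ici 0)) ^ 2 + 2 * opNorm A ^ 2 * opNorm lamInv ^ 2)⁻¹ ∧
      ∃ a b c d : ℝ, 0 < a ∧ 0 < b ∧ 0 < c ∧ 0 < d ∧
        ∀ t : ℝ, 0 ≤ t → ∀ p : St n m,
          (a * (sqnorm p.1 + sqnorm p.2.1 + sqnorm p.2.2) - d ≤ Rfun U lamInv δ (T t) p ∧
            Rfun U lamInv δ (T t) p ≤ b * (sqnorm p.1 + sqnorm p.2.1 + sqnorm p.2.2) + d) ∧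
          genL U A lam (T t) (Rfun U lamInv δ (T t)) p ≤
            -(c * T t) * Rfun U lamInv δ (T t) p + d :=
  stmt1_general n m U hU abar habar r1 r2 Ug hr1 hr2 hUg Um UM hUlow hUup hgrad1 hgrad2 A Ac hAc
    hApd lam lamInv hlamInv T hTpos hTdiff hTlim
end
end

section
/- Let M be a constant real matrix acting on full gradients (so that M∇h is a vector of linear combinations of the partial derivatives of h), and define Φ*(h) := |M∇h|²/h. Then for every T > 0 and every smooth, strictly positive function h on ℝⁿ×ℝⁿ×ℝᵐ: Γ_{L_T*, Φ*}(h) ≥ (M∇h)·[L_T*, M∇]h / h, where [L_T*, M∇]h denotes the commutator vector with i-th component L_T*((M∇h)_i) − (M∇(L_T* h))_i. -/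
noncomputable section

open Real MeasureTheory Filter

/-!
Write `v = M∇h` and `w = v / h`, so that `Φ*(h) = ∑ᵢ wᵢ² h`. The operator `L_T*` is a
first-order operator plus `A : D_z²`, hence satisfies the Leibniz rule
`L(fg) = f Lg + g Lf + Γ(f,g) + Γ(g,f)` with `Γ(f,g) = ∇_z f · A ∇_z g` (`zForm`).
Applied twice this gives `L(w²h) = 2w L(wh) − w² Lh + 2h Γ(w,w)`. Subtracting the Gateaux
derivative `dΦ*(h).(Lh) = 2 v·M∇(Lh)/h − |v|² Lh/h²` leaves
`Γ_{L*,Φ*}(h) = v·[L*, M∇]h / h + h ∑ᵢ Γ(wᵢ,wᵢ)`, and the last sum is nonnegative since `A`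
is positive definite.
-/

theorem sum_mul_apply_single {ι R : Type*} [Fintype ι] [DecidableEq ι] [CommSemiring R]
    (L : (ι → R) →ₗ[R] R) (c : ι → R) :
    ∑ i, c i * L (Pi.single i 1) = L c := by
  conv_rhs => rw [pi_eq_sum_univ' c]
  simp [map_sum, map_smul]

theorem contDiff_fderiv_apply_const {E : Type*} [NormedAddCommGroup E] [NormedSpace ℝ E]
    {f : E → ℝ} {k l : WithTop ℕ∞} (hf : ContDiff ℝ l f) (hkl : k + 1 ≤ l) (e : E) :
    ContDiff ℝ k (fun q => fderiv ℝ f q e) :=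
  (hf.fderiv_right hkl).clm_apply contDiff_const

theorem hasDerivAt_sqnorm_add_smul_div {k : ℕ} (u v : Fin k → ℝ) {c : ℝ} (d : ℝ) (hc : c ≠ 0) :
    HasDerivAt (fun s : ℝ => sqnorm (u + s • v) / (c + s * d))
      (2 * (u ⬝ᵥ v) / c - sqnorm u * d / c ^ 2) 0 := by
  have hN : HasDerivAt (fun s : ℝ => sqnorm (u + s • v)) (2 * (u ⬝ᵥ v)) 0 := by
    refine (HasDerivAt.fun_sum (u := Finset.univ) fun i _ =>
      (((hasDerivAt_id (0 : ℝ)).mul_const (v i)).const_add (u i)).fun_pow 2).congr_deriv ?_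
    simp only [id, dotProduct, Finset.mul_sum]
    exact Finset.sum_congr rfl fun i _ => by ring
  have hD : HasDerivAt (fun s : ℝ => c + s * d) d 0 := by
    simpa using ((hasDerivAt_id (0 : ℝ)).mul_const d).const_add c
  refine (hN.div hD (by simpa using hc)).congr_deriv ?_
  simp only [zero_mul, add_zero, zero_smul]
  field_simp

section

variable {n m : ℕ}

def drift (U : (Fin n → ℝ) → ℝ) (A : Matrix (Fin m) (Fin m) ℝ)
    (lam : Matrix (Fin m) (Fin n) ℝ) (T : ℝ) (p : St n m) : St n m :=
  (-p.2.1, (fun i => gradp U p.1 i) - lam.transpose.mulVec p.2.2,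
    lam.mulVec p.2.1 - T⁻¹ • A.mulVec p.2.2)

def zGrad (f : St n m → ℝ) (p : St n m) : Fin m → ℝ := fun j => pZ f j p

def zForm (A : Matrix (Fin m) (Fin m) ℝ) (f g : St n m → ℝ) (p : St n m) : ℝ :=
  zGrad f p ⬝ᵥ A.mulVec (zGrad g p)

def zDiffusion (A : Matrix (Fin m) (Fin m) ℝ) (f : St n m → ℝ) (p : St n m) : ℝ :=
  ∑ i, ∑ j, A i j * pZ (fun q => pZ f j q) i p

theorem genLstar_eq (U : (Fin n → ℝ) → ℝ) (A : Matrix (Fin m) (Fin m) ℝ)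
    (lam : Matrix (Fin m) (Fin n) ℝ) (T : ℝ) (f : St n m → ℝ) (p : St n m) :
    genLstar U A lam T f p = fderiv ℝ f p (drift U A lam T p) + zDiffusion A f p := by
  set L := fderiv ℝ f p
  have hX : ∀ c : Fin n → ℝ, ∑ i, c i * pX f i p = L (c, 0, 0) := fun c =>
    sum_mul_apply_single (L.comp (ContinuousLinearMap.inl ℝ _ _)).toLinearMap c
  have hY : ∀ c : Fin n → ℝ, ∑ i, c i * pY f i p = L (0, c, 0) := fun c =>
    sum_mul_apply_single (L.comp ((ContinuousLinearMap.inr ℝ _ _).comp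
      (ContinuousLinearMap.inl ℝ _ _))).toLinearMap c
  have hZ : ∀ c : Fin m → ℝ, ∑ j, c j * pZ f j p = L (0, 0, c) := fun c =>
    sum_mul_apply_single (L.comp ((ContinuousLinearMap.inr ℝ _ _).comp
      (ContinuousLinearMap.inr ℝ _ _))).toLinearMap c
  have hT : T⁻¹ * L (0, 0, A.mulVec p.2.2) = L (0, 0, T⁻¹ • A.mulVec p.2.2) := by
    rw [← smul_eq_mul, ← map_smul]
    simp
  rw [genLstar, zDiffusion, hX, hY, hY, hZ, hZ, hT, drift]
  congr 1
  simp only [← map_neg, ← map_add, ← map_sub]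
  congr 1
  ext <;> simp

theorem pZ_add {f g : St n m → ℝ} {p : St n m} (hf : DifferentiableAt ℝ f p)
    (hg : DifferentiableAt ℝ g p) (j : Fin m) :
    pZ (fun q => f q + g q) j p = pZ f j p + pZ g j p := by
  simp [pZ, fderiv_fun_add hf hg]

theorem pZ_mul {f g : St n m → ℝ} {p : St n m} (hf : DifferentiableAt ℝ f p)
    (hg : DifferentiableAt ℝ g p) (j : Fin m) :
    pZ (fun q => f q * g q) j p = f p * pZ g j p + g p * pZ f j p := by
  simp [pZ, fderiv_fun_mul hf hg]

theorem pZ_sum {ι : Type*} [Fintype ι] {f : ι → St n m → ℝ} {p : St n m}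
    (hf : ∀ a, DifferentiableAt ℝ (f a) p) (j : Fin m) :
    pZ (fun q => ∑ a, f a q) j p = ∑ a, pZ (f a) j p := by
  simp [pZ, fderiv_fun_sum fun a _ => hf a]

theorem zGrad_mul {f g : St n m → ℝ} {p : St n m} (hf : DifferentiableAt ℝ f p)
    (hg : DifferentiableAt ℝ g p) :
    zGrad (fun q => f q * g q) p = f p • zGrad g p + g p • zGrad f p := by
  ext j
  simp [zGrad, pZ_mul hf hg]

theorem differentiable_pZ {f : St n m → ℝ} (hf : ContDiff ℝ 2 f) (j : Fin m) :
    Differentiable ℝ (pZ f j) :=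
  (contDiff_fderiv_apply_const (k := 1) hf le_rfl _).differentiable one_ne_zero

theorem zDiffusion_mul (A : Matrix (Fin m) (Fin m) ℝ) {f g : St n m → ℝ}
    (hf : ContDiff ℝ 2 f) (hg : ContDiff ℝ 2 g) (p : St n m) :
    zDiffusion A (fun q => f q * g q) p = f p * zDiffusion A g p + g p * zDiffusion A f p
      + zForm A f g p + zForm A g f p := by
  have hf1 := hf.differentiable two_ne_zero
  have hg1 := hg.differentiable two_ne_zero
  have hpZ : ∀ i j, pZ (fun q => pZ (fun r => f r * g r) j q) i p
      = f p * pZ (pZ g j) i p + g p * pZ (pZ f j) i p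
        + (pZ f i p * pZ g j p + pZ g i p * pZ f j p) := by
    intro i j
    have : (fun q => pZ (fun r => f r * g r) j q) = fun q => f q * pZ g j q + g q * pZ f j q :=
      funext fun q => pZ_mul (hf1 q) (hg1 q) j
    rw [this, pZ_add ((hf1 p).fun_mul (differentiable_pZ hg j p))
      ((hg1 p).fun_mul (differentiable_pZ hf j p)), pZ_mul (hf1 p) (differentiable_pZ hg j p),
      pZ_mul (hg1 p) (differentiable_pZ hf j p)]
    ring
  simp only [zDiffusion, zForm, zGrad, hpZ, dotProduct, Matrix.mulVec, Finset.mul_sum,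
    ← Finset.sum_add_distrib]
  refine Finset.sum_congr rfl fun i _ => Finset.sum_congr rfl fun j _ => ?_
  ring

theorem zDiffusion_sum (A : Matrix (Fin m) (Fin m) ℝ) {ι : Type*} [Fintype ι]
    {f : ι → St n m → ℝ} (hf : ∀ a, ContDiff ℝ 2 (f a)) (p : St n m) :
    zDiffusion A (fun q => ∑ a, f a q) p = ∑ a, zDiffusion A (f a) p := by
  have hpZ : ∀ j, (fun q => pZ (fun r => ∑ a, f a r) j q) = fun q => ∑ a, pZ (f a) j q :=
    fun j => funext fun q => pZ_sum (fun a => (hf a).differentiable two_ne_zero q) j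
  have hpZpZ : ∀ i j, pZ (fun q => ∑ a, pZ (f a) j q) i p = ∑ a, pZ (pZ (f a) j) i p :=
    fun i j => pZ_sum (fun a => differentiable_pZ (hf a) j p) i
  simp only [zDiffusion, hpZ, hpZpZ, Finset.mul_sum]
  exact (Finset.sum_congr rfl fun i _ => Finset.sum_comm).trans Finset.sum_comm

section generator

variable (U : (Fin n → ℝ) → ℝ) (A : Matrix (Fin m) (Fin m) ℝ) (lam : Matrix (Fin m) (Fin n) ℝ)
  (T : ℝ)

theorem genLstar_mul {f g : St n m → ℝ} (hf : ContDiff ℝ 2 f) (hg : ContDiff ℝ 2 g)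
    (p : St n m) :
    genLstar U A lam T (fun q => f q * g q) p
      = f p * genLstar U A lam T g p + g p * genLstar U A lam T f p
        + zForm A f g p + zForm A g f p := by
  simp only [genLstar_eq, zDiffusion_mul A hf hg, fderiv_fun_mul
    (hf.differentiable two_ne_zero p) (hg.differentiable two_ne_zero p),
    add_apply, smul_apply, smul_eq_mul]
  ring

theorem genLstar_sum {ι : Type*} [Fintype ι] {f : ι → St n m → ℝ}
    (hf : ∀ a, ContDiff ℝ 2 (f a)) (p : St n m) :
    genLstar U A lam T (fun q => ∑ a, f a q) p = ∑ a, genLstar U A lam T (f a) p := by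
  simp only [genLstar_eq, zDiffusion_sum A hf,
    fderiv_fun_sum fun a _ => (hf a).differentiable two_ne_zero p,
    sum_apply, Finset.sum_add_distrib]

theorem genLstar_mul_mul_self {w h : St n m → ℝ} (hw : ContDiff ℝ 2 w) (hh : ContDiff ℝ 2 h)
    (p : St n m) :
    genLstar U A lam T (fun q => w q * (w q * h q)) p
      = 2 * w p * genLstar U A lam T (fun q => w q * h q) p - w p ^ 2 * genLstar U A lam T h p
        + 2 * h p * zForm A w w p := by
  rw [genLstar_mul U A lam T hw (hw.mul hh), genLstar_mul U A lam T hw hh]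
  simp only [zForm, zGrad_mul (hw.differentiable two_ne_zero p)
    (hh.differentiable two_ne_zero p), Matrix.mulVec_add, Matrix.mulVec_smul, dotProduct_add,
    dotProduct_smul, add_dotProduct, smul_dotProduct, smul_eq_mul]
  ring

theorem contDiff_genLstar (hU : ContDiff ℝ (⊤ : ℕ∞) U) {f : St n m → ℝ}
    (hf : ContDiff ℝ (⊤ : ℕ∞) f) :
    ContDiff ℝ (⊤ : ℕ∞) (genLstar U A lam T f) := by
  have hgradU : ∀ i, ContDiff ℝ (⊤ : ℕ∞) (fun p : St n m => gradp U p.1 i) := fun i =>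
    (contDiff_fderiv_apply_const hU (by exact_mod_cast le_top) _).comp contDiff_fst
  have hmulVec : ∀ {a b : ℕ} (M : Matrix (Fin a) (Fin b) ℝ),
      ContDiff ℝ (⊤ : ℕ∞) (fun v : Fin b → ℝ => M.mulVec v) := fun M =>
    (Matrix.mulVecLin M).toContinuousLinearMap.contDiff
  have hdrift : ContDiff ℝ (⊤ : ℕ∞) (drift U A lam T) := by
    have := contDiff_pi.2 hgradU
    unfold drift
    fun_prop
  have hpZ : ∀ j, ContDiff ℝ (⊤ : ℕ∞) (pZ f j) := fun j =>
    contDiff_fderiv_apply_const hf (by exact_mod_cast le_top) _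
  rw [show genLstar U A lam T f = _ from funext (genLstar_eq U A lam T f)]
  exact ((hf.fderiv_right (by exact_mod_cast le_top)).clm_apply hdrift).add <|
    ContDiff.sum fun i _ => ContDiff.sum fun j _ => contDiff_const.mul
      (contDiff_fderiv_apply_const (hpZ j) (by exact_mod_cast le_top) _)

end generator

theorem contDiff_fullGrad_apply {f : St n m → ℝ} (hf : ContDiff ℝ (⊤ : ℕ∞) f)
    (α : Fin n ⊕ (Fin n ⊕ Fin m)) : ContDiff ℝ (⊤ : ℕ∞) (fun q => fullGrad f q α) := by
  rcases α with i | i | j <;>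
    exact contDiff_fderiv_apply_const hf (by exact_mod_cast le_top) _

theorem fullGrad_add_mul {f g : St n m → ℝ} {p : St n m} (hf : DifferentiableAt ℝ f p)
    (hg : DifferentiableAt ℝ g p) (s : ℝ) :
    fullGrad (fun q => f q + s * g q) p = fullGrad f p + s • fullGrad g p := by
  have : fderiv ℝ (fun q => f q + s * g q) p = fderiv ℝ f p + s • fderiv ℝ g p := by
    rw [fderiv_fun_add hf (hg.const_mul s), fderiv_const_mul hg]
  ext (i | i | j) <;> simp [fullGrad, pX, pY, pZ, this]

theorem gateaux_sqnorm_mulVec_div {k : ℕ} (M : Matrix (Fin k) (Fin n ⊕ (Fin n ⊕ Fin m)) ℝ)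
    {h g : St n m → ℝ} {p : St n m} (hh : DifferentiableAt ℝ h p)
    (hg : DifferentiableAt ℝ g p) (hp : h p ≠ 0) :
    gateaux (fun f q => sqnorm (M.mulVec (fullGrad f q)) / f q) h g p
      = 2 * (M.mulVec (fullGrad h p) ⬝ᵥ M.mulVec (fullGrad g p)) / h p
        - sqnorm (M.mulVec (fullGrad h p)) * g p / h p ^ 2 := by
  simp only [gateaux, fullGrad_add_mul hh hg, Matrix.mulVec_add, Matrix.mulVec_smul]
  exact (hasDerivAt_sqnorm_add_smul_div _ _ _ hp).deriv

theorem GammaPhi_sqnorm_mulVec_div {U : (Fin n → ℝ) → ℝ} (hU : ContDiff ℝ (⊤ : ℕ∞) U)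
    (A : Matrix (Fin m) (Fin m) ℝ) (lam : Matrix (Fin m) (Fin n) ℝ) (T : ℝ) {k : ℕ}
    (M : Matrix (Fin k) (Fin n ⊕ (Fin n ⊕ Fin m)) ℝ) {h : St n m → ℝ}
    (hh : ContDiff ℝ (⊤ : ℕ∞) h) (hpos : ∀ q, 0 < h q) (p : St n m) :
    GammaPhi U A lam T (fun g q => sqnorm (M.mulVec (fullGrad g q)) / g q) h p
      = (∑ i, M.mulVec (fullGrad h p) i * (genLstar U A lam T (fun q => M.mulVec (fullGrad h q) i) p
            - M.mulVec (fullGrad (genLstar U A lam T h) p) i)) / h p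
        + h p * ∑ i, zForm A (fun q => M.mulVec (fullGrad h q) i / h q)
            (fun q => M.mulVec (fullGrad h q) i / h q) p := by
  have hne : ∀ q, h q ≠ 0 := fun q => (hpos q).ne'
  have hh2 : ContDiff ℝ 2 h := hh.of_le (WithTop.coe_le_coe.2 le_top)
  have hv : ∀ i, ContDiff ℝ (⊤ : ℕ∞) (fun q => M.mulVec (fullGrad h q) i) := fun i => by
    simp only [Matrix.mulVec, dotProduct]
    exact ContDiff.sum fun α _ => contDiff_const.mul (contDiff_fullGrad_apply hh α)
  have hw : ∀ i, ContDiff ℝ 2 (fun q => M.mulVec (fullGrad h q) i / h q) := fun i =>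
    ((hv i).div hh hne).of_le (WithTop.coe_le_coe.2 le_top)
  have hwh : ∀ i, (fun q => M.mulVec (fullGrad h q) i / h q * h q)
      = fun q => M.mulVec (fullGrad h q) i := fun i =>
    funext fun q => div_mul_cancel₀ _ (hne q)
  have hΦ : (fun q => sqnorm (M.mulVec (fullGrad h q)) / h q)
      = fun q => ∑ i, M.mulVec (fullGrad h q) i / h q
          * (M.mulVec (fullGrad h q) i / h q * h q) := by
    funext q
    simp only [sqnorm, Finset.sum_div]
    exact Finset.sum_congr rfl fun i _ => by field_simp
  have hLh := (contDiff_genLstar U A lam T hU hh).differentiable (by simp) p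
  rw [GammaPhi, hΦ, genLstar_sum U A lam T (fun i => (hw i).mul ((hw i).mul hh2)),
    gateaux_sqnorm_mulVec_div M (hh.differentiable (by simp) p) hLh (hne p)]
  simp only [genLstar_mul_mul_self U A lam T (hw _) hh2, hwh]
  rw [div_eq_iff two_ne_zero]
  simp only [sqnorm, dotProduct, Finset.mul_sum, Finset.sum_div, Finset.sum_mul,
    ← Finset.sum_sub_distrib, ← Finset.sum_add_distrib]
  have hp := hne p
  exact Finset.sum_congr rfl fun i _ => by field_simp; ring

end

theorem stmt4_general (n m : ℕ)
    (U : (Fin n → ℝ) → ℝ) (hU : ContDiff ℝ (⊤ : ℕ∞) U)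
    (A : Matrix (Fin m) (Fin m) ℝ) (Ac : ℝ) (hAc : 0 < Ac)
    (hApd : ∀ v : Fin m → ℝ, Ac * sqnorm v ≤ ∑ j, v j * A.mulVec v j)
    (lam : Matrix (Fin m) (Fin n) ℝ)
    (k : ℕ) (Mm : Matrix (Fin k) (Fin n ⊕ (Fin n ⊕ Fin m)) ℝ)
    (T : ℝ)
    (h : St n m → ℝ) (hh : ContDiff ℝ (⊤ : ℕ∞) h) (hhpos : ∀ p, 0 < h p) :
    ∀ p : St n m,
      (∑ i, (Mm.mulVec (fullGrad h p)) i *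
          (genLstar U A lam T (fun q => (Mm.mulVec (fullGrad h q)) i) p -
            (Mm.mulVec (fullGrad (genLstar U A lam T h) p)) i)) / h p ≤
        GammaPhi U A lam T (fun g q => sqnorm (Mm.mulVec (fullGrad g q)) / g q) h p := by
  intro p
  rw [GammaPhi_sqnorm_mulVec_div hU A lam T Mm hh hhpos p]
  refine le_add_of_nonneg_right (mul_nonneg (hhpos p).le (Finset.sum_nonneg fun i _ => ?_))
  exact (mul_nonneg hAc.le (Finset.sum_nonneg fun j _ => sq_nonneg _)).trans (hApd _)

/-- lower bound on Γ_{L_T*,Φ*} for Φ*(h) = |M∇h|²/h via the commutator. -/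
theorem stmt4 (n m : ℕ) (hn : 0 < n) (hm : 0 < m) (hnm : n ≤ m)
    (U : (Fin n → ℝ) → ℝ) (hU : ContDiff ℝ (⊤ : ℕ∞) U)
    (D2 : ℝ) (hD2 : ∀ x, ‖fderiv ℝ (fun y => fderiv ℝ U y) x‖ ≤ D2)
    (A : Matrix (Fin m) (Fin m) ℝ) (Ac : ℝ) (hAc : 0 < Ac)
    (hApd : ∀ v : Fin m → ℝ, Ac * sqnorm v ≤ ∑ j, v j * A.mulVec v j)
    (lam : Matrix (Fin m) (Fin n) ℝ) (lamInv : Matrix (Fin n) (Fin m) ℝ)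
    (hlamInv : lamInv * lam = 1)
    (k : ℕ) (Mm : Matrix (Fin k) (Fin n ⊕ (Fin n ⊕ Fin m)) ℝ)
    (T : ℝ) (hT : 0 < T)
    (h : St n m → ℝ) (hh : ContDiff ℝ (⊤ : ℕ∞) h) (hhpos : ∀ p, 0 < h p) :
    ∀ p : St n m,
      (∑ i, (Mm.mulVec (fullGrad h p)) i *
          (genLstar U A lam T (fun q => (Mm.mulVec (fullGrad h q)) i) p -
            (Mm.mulVec (fullGrad (genLstar U A lam T h) p)) i)) / h p ≤
        GammaPhi U A lam T (fun g q => sqnorm (Mm.mulVec (fullGrad g q)) / g q) h p :=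
  stmt4_general n m U hU A Ac hAc hApd lam k Mm T h hh hhpos
end
end
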